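/- For a complex a with Re(a) > 0, the function t ↦ ∫_{-∞}^{∞} (e^{2itu} + e^{-2itu}) / (e^u + e^{-u})^{2a} du from ℝ to ℂ is integrable over ℝ. -/

import Mathlib

/-!
With `w(u) = (e^u + e^{-u})^{-2a} = exp (-2a log (2 cosh u))`, the inner integral at `t` is
`𝓕 w (-t/π) + 𝓕 w (t/π)`. Since `(log (2 cosh))' = tanh` and `tanh' = cosh⁻²` are bounded, `w`,
`w'` and `w''` are all bounded by multiples of `e^{-2 Re a |u|}`, hence integrable. Then
`(1 + (2πξ)²) ‖𝓕 w ξ‖ = ‖𝓕 w ξ‖ + ‖𝓕 w'' ξ‖ ≤ ‖w‖₁ + ‖w''‖₁`, so `𝓕 w` is integrable.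
-/

open Real MeasureTheory Set
open scoped FourierTransform

theorem integrable_exp_neg_mul_abs {c : ℝ} (hc : 0 < c) :
    Integrable fun u : ℝ ↦ Real.exp (-c * |u|) := by
  rw [← integrableOn_univ, ← Iic_union_Ioi (a := 0), integrableOn_union]
  constructor
  · refine (integrableOn_exp_mul_Iic hc 0).congr_fun (fun u hu ↦ ?_) measurableSet_Iic
    rw [abs_of_nonpos hu, neg_mul_neg]
  · refine (exp_neg_integrableOn_Ioi 0 hc).congr_fun (fun u hu ↦ ?_) measurableSet_Ioi
    rw [abs_of_pos hu]

theorem MeasureTheory.Integrable.deriv_of_norm_le {E F : Type*} [NormedAddCommGroup E]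
    [NormedSpace ℝ E] [CompleteSpace E] [NormedAddCommGroup F] {f : ℝ → E} {g : ℝ → F}
    (hg : Integrable g) (C : ℝ) (h : ∀ u, ‖deriv f u‖ ≤ C * ‖g u‖) : Integrable (deriv f) :=
  (hg.norm.const_mul C).mono' (aestronglyMeasurable_deriv f _) (ae_of_all _ h)

theorem Real.integrable_fourier_of_integrable_deriv_deriv {E : Type*} [NormedAddCommGroup E]
    [NormedSpace ℂ E] {f : ℝ → E} (hf : Integrable f) (hf_diff : Differentiable ℝ f)
    (hf' : Integrable (deriv f)) (hf'_diff : Differentiable ℝ (deriv f))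
    (hf'' : Integrable (deriv (deriv f))) : Integrable (𝓕 f) := by
  have h𝓕'' (ξ : ℝ) : ‖𝓕 (deriv (deriv f)) ξ‖ = (2 * π * ξ) ^ 2 * ‖𝓕 f ξ‖ := by
    rw [fourier_deriv hf' hf'_diff hf'', fourier_deriv hf hf_diff hf']
    simp only [norm_smul, norm_mul, Complex.norm_real, Complex.norm_I, Real.norm_eq_abs,
      abs_of_pos pi_pos]
    norm_num
    rw [mul_pow, ← sq_abs ξ]
    ring
  set C := (∫ u, ‖f u‖) + ∫ u, ‖deriv (deriv f) u‖
  have hbound (ξ : ℝ) : ‖𝓕 f ξ‖ ≤ C * (1 + (2 * π * ξ) ^ 2)⁻¹ := by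
    rw [← div_eq_mul_inv, le_div_iff₀ (by positivity)]
    have h0 := VectorFourier.norm_fourierIntegral_le_integral_norm 𝐞 volume (innerₗ ℝ) f ξ
    have h2 := VectorFourier.norm_fourierIntegral_le_integral_norm 𝐞 volume (innerₗ ℝ)
      (deriv (deriv f)) ξ
    calc ‖𝓕 f ξ‖ * (1 + (2 * π * ξ) ^ 2) = ‖𝓕 f ξ‖ + ‖𝓕 (deriv (deriv f)) ξ‖ := by
          rw [h𝓕'']; ring
      _ ≤ C := add_le_add h0 h2
  have hdecay : Integrable fun ξ : ℝ ↦ C * (1 + (2 * π * ξ) ^ 2)⁻¹ :=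
    (integrable_inv_one_add_sq.comp_mul_left' (by positivity : 2 * π ≠ 0)).const_mul C
  exact hdecay.mono' (VectorFourier.fourierIntegral_continuous continuous_fourierChar
    continuous_inner hf).aestronglyMeasurable (ae_of_all _ hbound)

theorem Real.integral_exp_two_mul_I_mul_eq_fourier (f : ℝ → ℂ) (t : ℝ) :
    ∫ u : ℝ, Complex.exp (2 * Complex.I * t * u) * f u = 𝓕 f (t / -π) := by
  rw [fourier_real_eq_integral_exp_smul]
  congr with u
  rw [smul_eq_mul]
  congr 2
  push_cast
  field_simp

theorem MeasureTheory.Integrable.exp_two_mul_I_mul {f : ℝ → ℂ} (hf : Integrable f) (t : ℝ) :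
    Integrable fun u : ℝ ↦ Complex.exp (2 * Complex.I * t * u) * f u := by
  refine hf.bdd_mul (c := 1) (by fun_prop) (ae_of_all _ fun u ↦ ?_)
  rw [Complex.norm_exp]
  simp

theorem Real.integral_exp_add_exp_neg_mul_eq_fourier_add {f : ℝ → ℂ} (hf : Integrable f)
    (t : ℝ) :
    ∫ u : ℝ, (Complex.exp (2 * Complex.I * t * u) + Complex.exp (-(2 * Complex.I * t * u))) * f u
      = 𝓕 f (t / -π) + 𝓕 f (t / π) := by
  have hneg (u : ℝ) : -(2 * Complex.I * t * u) = 2 * Complex.I * ((-t : ℝ) : ℂ) * u := by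
    push_cast; ring
  simp_rw [add_mul, hneg]
  rw [integral_add (hf.exp_two_mul_I_mul t) (hf.exp_two_mul_I_mul (-t)),
    integral_exp_two_mul_I_mul_eq_fourier, integral_exp_two_mul_I_mul_eq_fourier, neg_div_neg_eq]

theorem Real.hasDerivAt_tanh (x : ℝ) : HasDerivAt tanh (cosh x ^ 2)⁻¹ x := by
  have h := (hasDerivAt_sinh x).div (hasDerivAt_cosh x) (cosh_pos x).ne'
  rw [show tanh = sinh / cosh from funext tanh_eq_sinh_div_cosh]
  refine h.congr_deriv ?_
  rw [← sq, ← sq, cosh_sq_sub_sinh_sq, one_div]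

theorem Real.hasDerivAt_log_two_mul_cosh (x : ℝ) :
    HasDerivAt (fun x ↦ Real.log (2 * cosh x)) (tanh x) x := by
  have h := ((hasDerivAt_cosh x).const_mul 2).log (by positivity)
  rwa [mul_div_mul_left _ _ two_ne_zero, ← tanh_eq_sinh_div_cosh] at h

theorem Real.abs_le_log_two_mul_cosh (x : ℝ) : |x| ≤ Real.log (2 * cosh x) := by
  rw [le_log_iff_exp_le (by positivity), ← cosh_abs, cosh_eq]
  linarith [Real.exp_pos (-|x|)]

theorem Real.norm_ofReal_tanh_le_one (x : ℝ) : ‖(tanh x : ℂ)‖ ≤ 1 := by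
  rw [Complex.norm_real, Real.norm_eq_abs]
  exact (abs_tanh_lt_one x).le

/-- `(2 cosh u) ^ (-s) = (e ^ u + e ^ (-u)) ^ (-s)`, through the real logarithm. -/
noncomputable def twoCoshCpowNeg (s : ℂ) (u : ℝ) : ℂ :=
  Complex.exp (-s * Real.log (2 * cosh u))

section TwoCoshCpowNeg

variable (s : ℂ)

theorem twoCoshCpowNeg_eq_inv_cpow (u : ℝ) :
    twoCoshCpowNeg s u = (((Real.exp u + Real.exp (-u) : ℝ) : ℂ) ^ s)⁻¹ := by
  have hpos : 0 < Real.exp u + Real.exp (-u) := by positivity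
  rw [twoCoshCpowNeg, cosh_eq, mul_div_cancel₀ _ two_ne_zero,
    Complex.cpow_def_of_ne_zero (Complex.ofReal_ne_zero.2 hpos.ne'), ← Complex.exp_neg,
    ← Complex.ofReal_log hpos.le, neg_mul, mul_comm]

theorem hasDerivAt_twoCoshCpowNeg (u : ℝ) :
    HasDerivAt (twoCoshCpowNeg s) (-s * tanh u * twoCoshCpowNeg s u) u := by
  have h := ((hasDerivAt_log_two_mul_cosh u).ofReal_comp.const_mul (-s)).cexp
  exact h.congr_deriv (by rw [twoCoshCpowNeg]; ring)

theorem deriv_twoCoshCpowNeg :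
    deriv (twoCoshCpowNeg s) = fun u ↦ -s * tanh u * twoCoshCpowNeg s u :=
  funext fun u ↦ (hasDerivAt_twoCoshCpowNeg s u).deriv

theorem hasDerivAt_deriv_twoCoshCpowNeg (u : ℝ) :
    HasDerivAt (deriv (twoCoshCpowNeg s))
      ((s ^ 2 * tanh u ^ 2 - s * (cosh u ^ 2)⁻¹) * twoCoshCpowNeg s u) u := by
  rw [deriv_twoCoshCpowNeg]
  have h := ((hasDerivAt_tanh u).ofReal_comp.const_mul (-s)).mul (hasDerivAt_twoCoshCpowNeg s u)
  exact h.congr_deriv (by push_cast; ring)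

theorem norm_deriv_twoCoshCpowNeg_le (u : ℝ) :
    ‖deriv (twoCoshCpowNeg s) u‖ ≤ ‖s‖ * ‖twoCoshCpowNeg s u‖ := by
  rw [deriv_twoCoshCpowNeg, norm_mul, norm_mul, norm_neg]
  gcongr
  exact mul_le_of_le_one_right (norm_nonneg s) (norm_ofReal_tanh_le_one u)

theorem norm_deriv_deriv_twoCoshCpowNeg_le (u : ℝ) :
    ‖deriv (deriv (twoCoshCpowNeg s)) u‖ ≤ (‖s‖ ^ 2 + ‖s‖) * ‖twoCoshCpowNeg s u‖ := by
  have hsech : ‖(((cosh u ^ 2)⁻¹ : ℝ) : ℂ)‖ ≤ 1 := by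
    rw [Complex.norm_real, norm_inv, norm_pow, Real.norm_eq_abs, abs_of_pos (cosh_pos u)]
    exact inv_le_one_of_one_le₀ (one_le_pow₀ (one_le_cosh u))
  rw [(hasDerivAt_deriv_twoCoshCpowNeg s u).deriv, norm_mul]
  gcongr
  calc ‖s ^ 2 * (tanh u : ℂ) ^ 2 - s * (((cosh u ^ 2)⁻¹ : ℝ) : ℂ)‖
      ≤ ‖s‖ ^ 2 * ‖(tanh u : ℂ)‖ ^ 2 + ‖s‖ * ‖(((cosh u ^ 2)⁻¹ : ℝ) : ℂ)‖ := by
        rw [← norm_pow, ← norm_pow, ← norm_mul, ← norm_mul]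
        exact norm_sub_le _ _
    _ ≤ ‖s‖ ^ 2 + ‖s‖ := by
        gcongr
        · exact mul_le_of_le_one_right (by positivity)
            (pow_le_one₀ (norm_nonneg _) (norm_ofReal_tanh_le_one u))
        · exact mul_le_of_le_one_right (norm_nonneg s) hsech

theorem differentiable_twoCoshCpowNeg : Differentiable ℝ (twoCoshCpowNeg s) :=
  fun u ↦ (hasDerivAt_twoCoshCpowNeg s u).differentiableAt

theorem differentiable_deriv_twoCoshCpowNeg : Differentiable ℝ (deriv (twoCoshCpowNeg s)) :=
  fun u ↦ (hasDerivAt_deriv_twoCoshCpowNeg s u).differentiableAt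

variable {s}

theorem norm_twoCoshCpowNeg_le (hs : 0 ≤ s.re) (u : ℝ) :
    ‖twoCoshCpowNeg s u‖ ≤ Real.exp (-s.re * |u|) := by
  rw [twoCoshCpowNeg, Complex.norm_exp, exp_le_exp]
  simp only [Complex.mul_re, Complex.neg_re, Complex.ofReal_re, Complex.neg_im,
    Complex.ofReal_im, mul_zero, sub_zero]
  exact mul_le_mul_of_nonpos_left (abs_le_log_two_mul_cosh u) (neg_nonpos.2 hs)

theorem integrable_twoCoshCpowNeg (hs : 0 < s.re) : Integrable (twoCoshCpowNeg s) :=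
  (integrable_exp_neg_mul_abs hs).mono'
    (differentiable_twoCoshCpowNeg s).continuous.aestronglyMeasurable
    (ae_of_all _ (norm_twoCoshCpowNeg_le hs.le))

theorem integrable_fourier_twoCoshCpowNeg (hs : 0 < s.re) :
    Integrable (𝓕 (twoCoshCpowNeg s)) := by
  have hw := integrable_twoCoshCpowNeg hs
  refine integrable_fourier_of_integrable_deriv_deriv hw (differentiable_twoCoshCpowNeg s) ?_
    (differentiable_deriv_twoCoshCpowNeg s) ?_
  · exact hw.deriv_of_norm_le _ (norm_deriv_twoCoshCpowNeg_le s)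
  · exact hw.deriv_of_norm_le _ (norm_deriv_deriv_twoCoshCpowNeg_le s)

end TwoCoshCpowNeg

theorem inner_integral_integrable (a : ℂ) (ha : 0 < a.re) :
    Integrable (fun t : ℝ => ∫ u : ℝ,
      (Complex.exp (2 * Complex.I * t * u) + Complex.exp (-(2 * Complex.I * t * u))) /
        ((Real.exp u + Real.exp (-u) : ℝ) : ℂ) ^ (2 * a)) := by
  have hs : 0 < (2 * a).re := by simpa using ha
  have hF := integrable_fourier_twoCoshCpowNeg hs
  refine ((hF.comp_div (neg_ne_zero.2 pi_ne_zero)).add (hF.comp_div pi_ne_zero)).congr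
    (ae_of_all _ fun t ↦ ?_)
  rw [Pi.add_apply, ← integral_exp_add_exp_neg_mul_eq_fourier_add (integrable_twoCoshCpowNeg hs)]
  congr with u
  rw [twoCoshCpowNeg_eq_inv_cpow, div_eq_mul_inv]
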